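/- arXiv:1209.3806 — 2 statements merged into one kernel-verified Lean document; each statement's English description precedes it below -/
import Mathlib

section
/- Let S, R : [0,∞) × D → D be two maps into a metric space (D, d) such that: (i) both are semigroups (S_0 = id, S_{ξ₁}S_{ξ₂} = S_{ξ₁+ξ₂}, same for R); (ii) both are Lipschitz with constant L: d(S_ξ a, S_ξ b) ≤ L·d(a,b) and similarly for R; (iii) for every a ∈ D, lim_{μ→0⁺} d(S_μ a, R_μ a)/μ = 0 uniformly in a. Then S_ξ = R_ξ for all ξ ≥ 0. -/
open Filter Topology

/-!
Split `[0, ξ]` into `n` steps of length `μ = ξ / n`. Writing `S_{(k+1)μ} = S_{kμ} S_μ` and passing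
from `S_{kμ}` to `R_{kμ}` at each step, the Lipschitz bound for `R` shows that the local defects
`d(S_μ b, R_μ b) ≤ ε μ` accumulate to at most `n L ε μ = L ξ ε`. Letting `ε → 0` gives
`S_ξ a = R_ξ a`.
-/

theorem dist_semigroups_natCast_mul_le {D : Type*} [PseudoMetricSpace D] {L : ℝ} (hL : 0 ≤ L)
    {S R : ℝ → D → D}
    (hS0 : ∀ a, S 0 a = a) (hR0 : ∀ a, R 0 a = a)
    (hSsemi : ∀ ξ₁ ≥ (0:ℝ), ∀ ξ₂ ≥ (0:ℝ), ∀ a, S ξ₁ (S ξ₂ a) = S (ξ₁ + ξ₂) a)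
    (hRsemi : ∀ ξ₁ ≥ (0:ℝ), ∀ ξ₂ ≥ (0:ℝ), ∀ a, R ξ₁ (R ξ₂ a) = R (ξ₁ + ξ₂) a)
    (hRLip : ∀ ξ ≥ (0:ℝ), ∀ a b, dist (R ξ a) (R ξ b) ≤ L * dist a b)
    {μ δ : ℝ} (hμ : 0 ≤ μ) (hstep : ∀ b, dist (S μ b) (R μ b) ≤ δ) (n : ℕ) (b : D) :
    dist (S (n * μ) b) (R (n * μ) b) ≤ n * (L * δ) := by
  induction n generalizing b with
  | zero => simp [hS0, hR0]
  | succ k ih =>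
    have hkμ : (0:ℝ) ≤ k * μ := by positivity
    have hsucc : ((k + 1 : ℕ) : ℝ) * μ = k * μ + μ := by push_cast; ring
    calc dist (S ((k + 1 : ℕ) * μ) b) (R ((k + 1 : ℕ) * μ) b)
        = dist (S (k * μ) (S μ b)) (R (k * μ) (R μ b)) := by
          rw [hSsemi _ hkμ _ hμ, hRsemi _ hkμ _ hμ, hsucc]
      _ ≤ dist (S (k * μ) (S μ b)) (R (k * μ) (S μ b))
            + dist (R (k * μ) (S μ b)) (R (k * μ) (R μ b)) := dist_triangle _ _ _
      _ ≤ k * (L * δ) + L * δ := by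
          gcongr
          · exact ih _
          · exact (hRLip _ hkμ _ _).trans (by gcongr; exact hstep b)
      _ = (k + 1 : ℕ) * (L * δ) := by push_cast; ring

theorem dist_semigroups_le_mul_of_tangent {D : Type*} [PseudoMetricSpace D] {L : ℝ} (hL : 0 ≤ L)
    {S R : ℝ → D → D}
    (hS0 : ∀ a, S 0 a = a) (hR0 : ∀ a, R 0 a = a)
    (hSsemi : ∀ ξ₁ ≥ (0:ℝ), ∀ ξ₂ ≥ (0:ℝ), ∀ a, S ξ₁ (S ξ₂ a) = S (ξ₁ + ξ₂) a)
    (hRsemi : ∀ ξ₁ ≥ (0:ℝ), ∀ ξ₂ ≥ (0:ℝ), ∀ a, R ξ₁ (R ξ₂ a) = R (ξ₁ + ξ₂) a)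
    (hRLip : ∀ ξ ≥ (0:ℝ), ∀ a b, dist (R ξ a) (R ξ b) ≤ L * dist a b)
    {ε μ₀ : ℝ} (hμ₀ : 0 < μ₀)
    (htangent : ∀ μ, 0 < μ → μ < μ₀ → ∀ a, dist (S μ a) (R μ a) ≤ ε * μ)
    {ξ : ℝ} (hξ : 0 < ξ) (a : D) :
    dist (S ξ a) (R ξ a) ≤ L * ξ * ε := by
  obtain ⟨n, hn⟩ := exists_nat_gt (ξ / μ₀)
  have hn_pos : (0:ℝ) < n := (div_pos hξ hμ₀).trans hn
  have hμ_pos : 0 < ξ / n := div_pos hξ hn_pos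
  have hμ_lt : ξ / n < μ₀ := by
    rw [div_lt_iff₀ hn_pos, mul_comm]
    exact (div_lt_iff₀ hμ₀).1 hn
  have h := dist_semigroups_natCast_mul_le hL hS0 hR0 hSsemi hRsemi hRLip hμ_pos.le
    (htangent _ hμ_pos hμ_lt) n a
  calc dist (S ξ a) (R ξ a) = dist (S (n * (ξ / n)) a) (R (n * (ξ / n)) a) := by
        rw [mul_div_cancel₀ ξ hn_pos.ne']
    _ ≤ n * (L * (ε * (ξ / n))) := h
    _ = L * ξ * ε := by field_simp

theorem lipschitz_semigroups_with_same_local_flow_coincide_general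
    {D : Type*} [MetricSpace D] (L : ℝ) (hL : 1 ≤ L)
    (S R : ℝ → D → D)
    (hS0 : ∀ a, S 0 a = a) (hR0 : ∀ a, R 0 a = a)
    (hSsemi : ∀ ξ₁ ≥ (0:ℝ), ∀ ξ₂ ≥ (0:ℝ), ∀ a, S ξ₁ (S ξ₂ a) = S (ξ₁ + ξ₂) a)
    (hRsemi : ∀ ξ₁ ≥ (0:ℝ), ∀ ξ₂ ≥ (0:ℝ), ∀ a, R ξ₁ (R ξ₂ a) = R (ξ₁ + ξ₂) a)
    (hRLip : ∀ ξ ≥ (0:ℝ), ∀ a b, dist (R ξ a) (R ξ b) ≤ L * dist a b)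
    (htangent : ∀ ε > (0:ℝ), ∃ μ₀ > (0:ℝ), ∀ μ, 0 < μ → μ < μ₀ →
        ∀ a, dist (S μ a) (R μ a) ≤ ε * μ) :
    ∀ ξ ≥ (0:ℝ), ∀ a, S ξ a = R ξ a := by
  intro ξ hξ a
  rcases hξ.eq_or_lt with rfl | hξ
  · rw [hS0, hR0]
  have hbound : ∀ᶠ ε in 𝓝[>] (0:ℝ), dist (S ξ a) (R ξ a) ≤ L * ξ * ε := by
    filter_upwards [self_mem_nhdsWithin] with ε hε
    obtain ⟨μ₀, hμ₀, hlocal⟩ := htangent ε hε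
    exact dist_semigroups_le_mul_of_tangent (zero_le_one.trans hL) hS0 hR0 hSsemi hRsemi hRLip
      hμ₀ hlocal hξ a
  have hlim : Tendsto (fun ε => L * ξ * ε) (𝓝[>] (0:ℝ)) (𝓝 0) :=
    ((continuous_const_mul (L * ξ)).tendsto' 0 0 (mul_zero _)).mono_left nhdsWithin_le_nhds
  exact dist_le_zero.1 (ge_of_tendsto hlim hbound)

/-- Uniqueness of Lipschitz semigroups with the same local flow: two Lipschitz
semigroups whose trajectories are tangent at time zero, uniformly in the data,
coincide. -/
theorem lipschitz_semigroups_with_same_local_flow_coincide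
    {D : Type*} [MetricSpace D] (L : ℝ) (hL : 1 ≤ L)
    (S R : ℝ → D → D)
    (hS0 : ∀ a, S 0 a = a) (hR0 : ∀ a, R 0 a = a)
    (hSsemi : ∀ ξ₁ ≥ (0:ℝ), ∀ ξ₂ ≥ (0:ℝ), ∀ a, S ξ₁ (S ξ₂ a) = S (ξ₁ + ξ₂) a)
    (hRsemi : ∀ ξ₁ ≥ (0:ℝ), ∀ ξ₂ ≥ (0:ℝ), ∀ a, R ξ₁ (R ξ₂ a) = R (ξ₁ + ξ₂) a)
    (hSLip : ∀ ξ ≥ (0:ℝ), ∀ a b, dist (S ξ a) (S ξ b) ≤ L * dist a b)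
    (hRLip : ∀ ξ ≥ (0:ℝ), ∀ a b, dist (R ξ a) (R ξ b) ≤ L * dist a b)
    (htangent : ∀ ε > (0:ℝ), ∃ μ₀ > (0:ℝ), ∀ μ, 0 < μ → μ < μ₀ →
        ∀ a, dist (S μ a) (R μ a) ≤ ε * μ) :
    ∀ ξ ≥ (0:ℝ), ∀ a, S ξ a = R ξ a :=
  lipschitz_semigroups_with_same_local_flow_coincide_general L hL S R hS0 hR0 hSsemi hRsemi hRLip
    htangent
end

section
/- Let S be an L-Lipschitz semigroup on a subset D of L¹(ℝ₊; ℝ³): d(S_ξ a, S_ξ b) ≤ L·d(a,b) and d(S_ξ a, S_σ a) ≤ L|ξ−σ|. Let Z : [0,T] → D be Lipschitz continuous. Then d(Z(T), S_T Z(0)) ≤ L·∫₀^T limsup_{μ→0⁺} d(Z(ξ+μ), S_μ Z(ξ))/μ dξ, provided the integrand is measurable. -/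
open Filter MeasureTheory intervalIntegral

lemma mono_ftc {ψ : ℝ → ℝ} (hψ : Monotone ψ) {a b : ℝ} (hab : a ≤ b) :
    ∃ ρ : ℝ → ℝ, Measurable ρ ∧ (∀ x, 0 ≤ ρ x) ∧ (∀ᵐ x, HasDerivAt ψ (ρ x) x) ∧
      IntegrableOn ρ (Set.Ioo a b) ∧ ∫ x in Set.Ioo a b, ρ x ≤ ψ b - ψ a := by
  set g := hψ.stieltjesFunction with hgdef
  set μ := g.measure with hμdef
  have hsub : 0 ≤ ψ b - ψ a := sub_nonneg.2 (hψ hab)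
  have hμIoo : μ (Set.Ioo a b) = ENNReal.ofReal (Function.leftLim g b - g a) := g.measure_Ioo
  have hlint : ∫⁻ x in Set.Ioo a b, μ.rnDeriv volume x ∂volume ≤ μ (Set.Ioo a b) :=
    Measure.setLIntegral_rnDeriv_le _
  have hlt : ∫⁻ x in Set.Ioo a b, μ.rnDeriv volume x ∂volume ≠ ⊤ :=
    (hlint.trans_lt (by rw [hμIoo]; exact ENNReal.ofReal_lt_top)).ne
  have hc : Function.leftLim g b - g a ≤ ψ b - ψ a := by
    have h1 : ψ a ≤ g a := by
      rw [hgdef, hψ.stieltjesFunction_eq]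
      exact hψ.le_rightLim le_rfl
    have h2 : Function.leftLim g b ≤ ψ b := by
      refine le_of_tendsto (Monotone.tendsto_leftLim g.mono b) ?_
      filter_upwards [self_mem_nhdsWithin] with y (hy : y < b)
      rw [hgdef, hψ.stieltjesFunction_eq]
      exact hψ.rightLim_le hy
    linarith
  refine ⟨fun x => (μ.rnDeriv volume x).toReal, (Measure.measurable_rnDeriv _ _).ennreal_toReal,
    fun x => ENNReal.toReal_nonneg, hψ.ae_hasDerivAt, ?_, ?_⟩
  · exact integrable_toReal_of_lintegral_ne_top
      (Measure.measurable_rnDeriv _ _).aemeasurable hlt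
  · rw [integral_toReal (Measure.measurable_rnDeriv _ _).aemeasurable
      (ae_restrict_of_ae (Measure.rnDeriv_lt_top μ volume))]
    calc (∫⁻ x in Set.Ioo a b, μ.rnDeriv volume x ∂volume).toReal
        ≤ (ENNReal.ofReal (Function.leftLim g b - g a)).toReal := by
          apply ENNReal.toReal_mono ENNReal.ofReal_ne_top
          rw [← hμIoo]; exact hlint
      _ ≤ ψ b - ψ a := by
          rcases le_or_gt (Function.leftLim g b - g a) 0 with h | h
          · rw [ENNReal.ofReal_eq_zero.2 h]; simpa using hsub
          · rw [ENNReal.toReal_ofReal h.le]; exact hc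

/-- Fundamental error estimate for a Lipschitz semigroup: the distance between
an approximate Lipschitz trajectory `Z` and the exact semigroup trajectory is
bounded by `L` times the integral of the instantaneous error rate. -/
theorem semigroup_error_estimate
    {D : Type*} [MetricSpace D] (L T : ℝ) (hL : 1 ≤ L) (hT : 0 < T)
    (S : ℝ → D → D)
    (hS0 : ∀ a, S 0 a = a)
    (hSsemi : ∀ ξ₁ ≥ (0:ℝ), ∀ ξ₂ ≥ (0:ℝ), ∀ a, S ξ₁ (S ξ₂ a) = S (ξ₁ + ξ₂) a)
    (hSLip : ∀ ξ ≥ (0:ℝ), ∀ a b, dist (S ξ a) (S ξ b) ≤ L * dist a b)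
    (hStime : ∀ ξ ≥ (0:ℝ), ∀ σ ≥ (0:ℝ), ∀ a, dist (S ξ a) (S σ a) ≤ L * |ξ - σ|)
    (Z : ℝ → D) (KZ : NNReal) (hZ : LipschitzOnWith KZ Z (Set.Icc 0 T))
    (g : ℝ → ℝ)
    (hg : ∀ ξ, g ξ = Filter.limsup
        (fun μ => dist (Z (ξ + μ)) (S μ (Z ξ)) / μ) (nhdsWithin 0 (Set.Ioi 0)))
    (hgint : IntervalIntegrable g volume 0 T) :
    dist (Z T) (S T (Z 0)) ≤ L * ∫ ξ in (0:ℝ)..T, g ξ := by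
  have hL0 : (0:ℝ) < L := lt_of_lt_of_le one_pos hL
  set Kc : ℝ := L * (KZ + 1) with hKcdef
  have hKc0 : 0 ≤ Kc := by positivity
  set K' : NNReal := Real.toNNReal Kc with hK'def
  have hK'c : (K' : ℝ) = Kc := Real.coe_toNNReal _ hKc0
  set Φ : ℝ → ℝ := fun t => dist (S (T - t) (Z t)) (S T (Z 0)) with hΦdef
  -- Φ is Lipschitz on [0, T]
  have hΦLip : LipschitzOnWith K' Φ (Set.Icc 0 T) := by
    apply LipschitzOnWith.of_dist_le_mul
    intro s hs t ht
    have hs0 : (0:ℝ) ≤ T - s := by linarith [hs.2]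
    have ht0 : (0:ℝ) ≤ T - t := by linarith [ht.2]
    have h1 : dist (Φ s) (Φ t) ≤ dist (S (T - s) (Z s)) (S (T - t) (Z t)) := by
      rw [Real.dist_eq]
      exact abs_dist_sub_le _ _ _
    have h2 : dist (S (T - s) (Z s)) (S (T - t) (Z t)) ≤
        dist (S (T - s) (Z s)) (S (T - s) (Z t)) + dist (S (T - s) (Z t)) (S (T - t) (Z t)) :=
      dist_triangle _ _ _
    have h3 : dist (S (T - s) (Z s)) (S (T - s) (Z t)) ≤ L * (KZ * dist s t) :=
      le_trans (hSLip _ hs0 _ _) (by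
        have := hZ.dist_le_mul s hs t ht
        nlinarith [dist_nonneg (x := S (T-s) (Z s)) (y := S (T-s) (Z t))])
    have h4 : dist (S (T - s) (Z t)) (S (T - t) (Z t)) ≤ L * dist s t := by
      have := hStime _ hs0 _ ht0 (Z t)
      have habs : |T - s - (T - t)| = dist s t := by
        rw [Real.dist_eq]; rw [abs_sub_comm]; ring_nf
      rwa [habs] at this
    rw [hK'c, hKcdef]
    nlinarith [dist_nonneg (x := s) (y := t)]
  obtain ⟨F, hFLip, hFeq⟩ := hΦLip.extend_real
  -- ψ is monotone
  set ψ : ℝ → ℝ := fun t => (K' : ℝ) * t - F t with hψdef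
  have hψmono : Monotone ψ := by
    intro s t hst
    have := hFLip.dist_le_mul t s
    rw [Real.dist_eq, Real.dist_eq] at this
    have h1 : F t - F s ≤ (K' : ℝ) * (t - s) := by
      calc F t - F s ≤ |F t - F s| := le_abs_self _
        _ ≤ (K' : ℝ) * |t - s| := this
        _ = (K' : ℝ) * (t - s) := by rw [abs_of_nonneg (by linarith)]
    simp only [hψdef]
    nlinarith
  obtain ⟨ρ, hρm, hρ0, hρd, hρint, hρle⟩ := mono_ftc hψmono hT.le
  -- key pointwise bound
  have key : ∀ x ∈ Set.Ioo 0 T, HasDerivAt ψ (ρ x) x → (K' : ℝ) - ρ x ≤ L * g x := by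
    intro x hx hd
    obtain ⟨hx0, hxT⟩ := hx
    have hdF : HasDerivAt F ((K' : ℝ) - ρ x) x := by
      have h := ((hasDerivAt_id x).const_mul (K' : ℝ)).sub hd
      have heq : (fun t => (K' : ℝ) * t - ψ t) = F := by
        funext t; simp [hψdef]
      rw [← heq]
      rw [mul_one] at h; exact h
    -- slope tendsto from the right
    have hmap : Tendsto (fun μ : ℝ => x + μ) (nhdsWithin 0 (Set.Ioi 0))
        (nhdsWithin x {x}ᶜ) := by
      apply tendsto_nhdsWithin_of_tendsto_nhds_of_eventually_within
      · have : Tendsto (fun μ : ℝ => x + μ) (nhds 0) (nhds (x + 0)) :=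
          (tendsto_id.const_add x)
        simpa using this.mono_left nhdsWithin_le_nhds
      · filter_upwards [self_mem_nhdsWithin] with μ (hμ : 0 < μ)
        simp only [Set.mem_compl_iff, Set.mem_singleton_iff]
        intro h; linarith [hμ, congrArg (· - x) h]
    have hslope : Tendsto (fun μ => (F (x + μ) - F x) / μ) (nhdsWithin 0 (Set.Ioi 0))
        (nhds ((K' : ℝ) - ρ x)) := by
      rw [hasDerivAt_iff_tendsto_slope] at hdF
      have := hdF.comp hmap
      refine this.congr fun μ => ?_
      simp [slope_def_field, Function.comp]
    set u : ℝ → ℝ := fun μ => dist (Z (x + μ)) (S μ (Z x)) / μ with hudef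
    have hIoo : Set.Ioo (0:ℝ) (T - x) ∈ nhdsWithin (0:ℝ) (Set.Ioi 0) :=
      Ioo_mem_nhdsGT_of_mem ⟨le_rfl, by linarith⟩
    -- bound on u
    have hub : ∀ᶠ μ in nhdsWithin (0:ℝ) (Set.Ioi 0), u μ ≤ (KZ : ℝ) + L := by
      filter_upwards [hIoo] with μ hμ
      obtain ⟨hμ0, hμT⟩ := hμ
      have hmem : x + μ ∈ Set.Icc (0:ℝ) T := ⟨by linarith, by linarith⟩
      have hmem' : x ∈ Set.Icc (0:ℝ) T := ⟨hx0.le, hxT.le⟩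
      have h1 : dist (Z (x + μ)) (Z x) ≤ (KZ : ℝ) * μ := by
        have := hZ.dist_le_mul _ hmem _ hmem'
        rwa [Real.dist_eq, add_sub_cancel_left, abs_of_pos hμ0] at this
      have h2 : dist (Z x) (S μ (Z x)) ≤ L * μ := by
        have := hStime 0 le_rfl μ hμ0.le (Z x)
        rw [hS0] at this
        rwa [zero_sub, abs_neg, abs_of_pos hμ0] at this
      have h3 : dist (Z (x + μ)) (S μ (Z x)) ≤ ((KZ : ℝ) + L) * μ := by
        calc dist (Z (x + μ)) (S μ (Z x)) ≤
            dist (Z (x + μ)) (Z x) + dist (Z x) (S μ (Z x)) := dist_triangle _ _ _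
          _ ≤ (KZ : ℝ) * μ + L * μ := add_le_add h1 h2
          _ = ((KZ : ℝ) + L) * μ := by ring
      rw [hudef]
      exact div_le_of_le_mul₀ hμ0.le (by positivity) (by linarith [h3])
    -- slope bound
    have hle : ∀ᶠ μ in nhdsWithin (0:ℝ) (Set.Ioi 0),
        (F (x + μ) - F x) / μ ≤ L * u μ := by
      filter_upwards [hIoo] with μ hμ
      obtain ⟨hμ0, hμT⟩ := hμ
      have hmem : x + μ ∈ Set.Icc (0:ℝ) T := ⟨by linarith, by linarith⟩
      have hmem' : x ∈ Set.Icc (0:ℝ) T := ⟨hx0.le, hxT.le⟩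
      rw [← hFeq hmem, ← hFeq hmem']
      have e0 : T - (x + μ) + μ = T - x := by ring
      have e1 : S (T - (x + μ)) (S μ (Z x)) = S (T - x) (Z x) := by
        rw [hSsemi (T - (x + μ)) (by linarith) μ hμ0.le (Z x), e0]
      have tri := dist_triangle (S (T - (x + μ)) (Z (x + μ)))
        (S (T - (x + μ)) (S μ (Z x))) (S T (Z 0))
      have e2 : dist (S (T - (x + μ)) (S μ (Z x))) (S T (Z 0)) = Φ x := by
        rw [e1]
      have hkey : Φ (x + μ) - Φ x ≤ L * dist (Z (x + μ)) (S μ (Z x)) := by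
        have h5 : dist (S (T - (x + μ)) (Z (x + μ))) (S (T - (x + μ)) (S μ (Z x))) ≤
            L * dist (Z (x + μ)) (S μ (Z x)) := hSLip _ (by linarith) _ _
        have hΦxμ : Φ (x + μ) = dist (S (T - (x + μ)) (Z (x + μ))) (S T (Z 0)) := rfl
        linarith
      calc (Φ (x + μ) - Φ x) / μ ≤ (L * dist (Z (x + μ)) (S μ (Z x))) / μ := by
            apply div_le_div_of_nonneg_right hkey hμ0.le
        _ = L * u μ := by rw [hudef]; ring
    -- conclude via epsilon argument
    have heps : ∀ ε > (0:ℝ), (K' : ℝ) - ρ x ≤ L * g x + L * ε := by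
      intro ε hε
      have hbd : IsBoundedUnder (· ≤ ·) (nhdsWithin (0:ℝ) (Set.Ioi 0)) u :=
        isBoundedUnder_of_eventually_le hub
      have hlim : limsup u (nhdsWithin (0:ℝ) (Set.Ioi 0)) < g x + ε := by
        rw [← hg x]; linarith
      have hev : ∀ᶠ μ in nhdsWithin (0:ℝ) (Set.Ioi 0), u μ < g x + ε :=
        eventually_lt_of_limsup_lt hlim hbd
      have : ∀ᶠ μ in nhdsWithin (0:ℝ) (Set.Ioi 0),
          (F (x + μ) - F x) / μ ≤ L * (g x + ε) := by
        filter_upwards [hle, hev] with μ h1 h2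
        calc (F (x + μ) - F x) / μ ≤ L * u μ := h1
          _ ≤ L * (g x + ε) := by nlinarith
      have := le_of_tendsto hslope this
      linarith
    by_contra hcon
    push_neg at hcon
    obtain ⟨ε, hε, hcontr⟩ : ∃ ε > (0:ℝ), L * g x + L * ε < (K' : ℝ) - ρ x := by
      refine ⟨((K' : ℝ) - ρ x - L * g x) / (2 * L),
        div_pos (by linarith) (by linarith), ?_⟩
      have : L * (((K' : ℝ) - ρ x - L * g x) / (2 * L)) = ((K' : ℝ) - ρ x - L * g x) / 2 := by
        field_simp
      rw [this]; linarith
    exact absurd (heps ε hε) (not_le.2 hcontr)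
  -- final assembly
  have hF0 : F 0 = 0 := by
    rw [← hFeq (Set.left_mem_Icc.2 hT.le)]
    simp [hΦdef]
  have hFT : F T = dist (Z T) (S T (Z 0)) := by
    rw [← hFeq (Set.right_mem_Icc.2 hT.le)]
    simp [hΦdef, hS0]
  -- integrability of L * g on Ioo 0 T
  have hgIoc : IntegrableOn g (Set.Ioc 0 T) volume :=
    (intervalIntegrable_iff_integrableOn_Ioc_of_le hT.le).mp hgint
  have hgIoo : IntegrableOn (fun x => L * g x) (Set.Ioo 0 T) volume :=
    ((hgIoc.mono_set Set.Ioo_subset_Ioc_self).const_mul L)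
  -- a.e. bound on restrict
  have hae : ∀ᵐ x ∂(volume.restrict (Set.Ioo 0 T)), (K' : ℝ) - ρ x ≤ L * g x := by
    filter_upwards [ae_restrict_mem measurableSet_Ioo, ae_restrict_of_ae hρd] with x hx hdx
    exact key x hx hdx
  have hconst : IntegrableOn (fun _ : ℝ => (K' : ℝ)) (Set.Ioo 0 T) volume := by
    refine integrableOn_const ?_ enorm_ne_top
    rw [Real.volume_Ioo]
    exact ENNReal.ofReal_ne_top
  have hint1 : ∫ x in Set.Ioo (0:ℝ) T, ((K' : ℝ) - ρ x) ≤ ∫ x in Set.Ioo (0:ℝ) T, L * g x :=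
    integral_mono_ae (hconst.sub hρint) hgIoo hae
  have hint2 : ∫ x in Set.Ioo (0:ℝ) T, ((K' : ℝ) - ρ x) =
      (K' : ℝ) * T - ∫ x in Set.Ioo (0:ℝ) T, ρ x := by
    rw [integral_sub hconst hρint, setIntegral_const]
    congr 1
    simp [Real.volume_Ioo, ENNReal.toReal_ofReal hT.le, smul_eq_mul, mul_comm, hT.le]
  have hψT : ψ T - ψ 0 = (K' : ℝ) * T - F T := by
    simp only [hψdef]
    rw [hF0]; ring
  have hFTle : F T ≤ ∫ x in Set.Ioo (0:ℝ) T, L * g x := by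
    rw [hψT] at hρle
    linarith [hint1, hint2, hρle]
  have hfin : ∫ x in Set.Ioo (0:ℝ) T, L * g x = L * ∫ ξ in (0:ℝ)..T, g ξ := by
    rw [← integral_Ioc_eq_integral_Ioo, ← intervalIntegral.integral_of_le hT.le,
      intervalIntegral.integral_const_mul]
  rw [← hFT, ← hfin]
  exact hFTle
end
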